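/- Let T : H^∞_0(𝔻) → H^∞_0(𝔻) be a map. Then T is an automorphism if and only if there exists θ ∈ ℝ such that (Tf)(z) = f(e^{iθ} z) for all f ∈ H^∞_0(𝔻) and all z ∈ 𝔻. -/

import Mathlib

open Set Metric Complex MeasureTheory Filter

noncomputable section

/-- The open unit disc in `ℂ`. -/
def D : Set ℂ := Metric.ball (0 : ℂ) 1

/-- `H^∞(𝔻)`: bounded analytic functions on the open unit disc.  Functions are represented by
their values on `ℂ`; only the values on `D` are relevant, and two representatives are
identified when they agree on `D`. -/
def Hinf : Set (ℂ → ℂ) :=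
  {f | DifferentiableOn ℂ f D ∧ ∃ C : ℝ, ∀ z ∈ D, ‖f z‖ ≤ C}

/-- `H^∞_0(𝔻) = {f ∈ H^∞(𝔻) : f 0 = 0}`. -/
def Hinf0 : Set (ℂ → ℂ) := {f | f ∈ Hinf ∧ f 0 = 0}

/-- The Neil algebra `H^∞_1(𝔻) = {f ∈ H^∞(𝔻) : f'(0) = 0}`. -/
def Hinf1 : Set (ℂ → ℂ) := {f | f ∈ Hinf ∧ deriv f 0 = 0}

/-- `T` is an automorphism (bijective ℂ-linear multiplicative map) of the algebra of
holomorphic functions `A`, where two functions are identified when they agree on `D`. -/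
def IsAlgAutOn (A : Set (ℂ → ℂ)) (T : (ℂ → ℂ) → (ℂ → ℂ)) : Prop :=
  (∀ f ∈ A, T f ∈ A) ∧
  (∀ f ∈ A, ∀ g ∈ A, Set.EqOn f g D → Set.EqOn (T f) (T g) D) ∧
  (∀ f ∈ A, ∀ g ∈ A, Set.EqOn (T (f + g)) (T f + T g) D) ∧
  (∀ (c : ℂ), ∀ f ∈ A, Set.EqOn (T (c • f)) (c • T f) D) ∧
  (∀ f ∈ A, ∀ g ∈ A, Set.EqOn (T (f * g)) (T f * T g) D) ∧
  (∀ f ∈ A, ∀ g ∈ A, Set.EqOn (T f) (T g) D → Set.EqOn f g D) ∧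
  (∀ g ∈ A, ∃ f ∈ A, Set.EqOn (T f) g D)

/-- A function in `H^∞(𝔻)` is inner if its radial boundary values have modulus one at almost
every boundary point. -/
def IsInner (φ : ℂ → ℂ) : Prop :=
  φ ∈ Hinf ∧ ∀ᵐ (θ : ℝ) ∂(volume : Measure ℝ),
    Filter.Tendsto (fun r : ℝ => ‖φ ((r : ℂ) * Complex.exp ((θ : ℂ) * Complex.I))‖)
      (nhdsWithin 1 (Set.Iio 1)) (nhds 1)

/-- A conformal automorphism of the unit disc: a bijective holomorphic self-map of `D`. -/
def IsConfAut (τ : ℂ → ℂ) : Prop := DifferentiableOn ℂ τ D ∧ Set.BijOn τ D D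

section Aux

lemma D_eq : D = Metric.ball (0 : ℂ) 1 := rfl

lemma isOpen_D : IsOpen D := isOpen_ball

lemma zero_mem_D : (0 : ℂ) ∈ D := by simp [D]

lemma mem_D_iff {z : ℂ} : z ∈ D ↔ ‖z‖ < 1 := by
  simp [D, mem_ball, dist_zero_right]

lemma half_mem_D : ((1:ℂ)/2) ∈ D := by
  rw [mem_D_iff, show ((1:ℂ)/2) = ((1/2 : ℝ) : ℂ) by norm_num, Complex.norm_real, Real.norm_eq_abs,
    abs_of_pos (by norm_num : (0:ℝ) < 1/2)]
  norm_num

lemma idf_mem : (fun z : ℂ => z) ∈ Hinf0 :=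
  ⟨⟨differentiableOn_id, 1, fun z hz => (mem_D_iff.1 hz).le⟩, rfl⟩

lemma add_mem0 {f g : ℂ → ℂ} (hf : f ∈ Hinf0) (hg : g ∈ Hinf0) : f + g ∈ Hinf0 := by
  obtain ⟨⟨hfd, Cf, hCf⟩, hf0⟩ := hf
  obtain ⟨⟨hgd, Cg, hCg⟩, hg0⟩ := hg
  refine ⟨⟨hfd.add hgd, Cf + Cg, fun z hz => ?_⟩, by simp [hf0, hg0]⟩
  exact (norm_add_le _ _).trans (add_le_add (hCf z hz) (hCg z hz))

lemma smul_mem0 (c : ℂ) {f : ℂ → ℂ} (hf : f ∈ Hinf0) : c • f ∈ Hinf0 := by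
  obtain ⟨⟨hfd, Cf, hCf⟩, hf0⟩ := hf
  refine ⟨⟨hfd.const_smul c, ‖c‖ * Cf, fun z hz => ?_⟩, by simp [hf0]⟩
  simp only [Pi.smul_apply, smul_eq_mul, norm_mul]
  exact mul_le_mul_of_nonneg_left (hCf z hz) (norm_nonneg c)

lemma mul_mem0 {f g : ℂ → ℂ} (hf : f ∈ Hinf0) (hg : g ∈ Hinf) : f * g ∈ Hinf0 := by
  obtain ⟨⟨hfd, Cf, hCf⟩, hf0⟩ := hf
  obtain ⟨hgd, Cg, hCg⟩ := hg
  have hCf0 : 0 ≤ Cf := le_trans (norm_nonneg _) (hCf 0 zero_mem_D)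
  refine ⟨⟨hfd.mul hgd, Cf * Cg, fun z hz => ?_⟩, by simp [hf0]⟩
  simp only [Pi.mul_apply, norm_mul]
  exact mul_le_mul (hCf z hz) (hCg z hz) (norm_nonneg _) hCf0

lemma mem_of_eqOn {f g : ℂ → ℂ} (hg : g ∈ Hinf0) (h : Set.EqOn f g D) : f ∈ Hinf0 := by
  obtain ⟨⟨hgd, Cg, hCg⟩, hg0⟩ := hg
  exact ⟨⟨hgd.congr h, Cg, fun z hz => (h hz) ▸ hCg z hz⟩, (h zero_mem_D).trans hg0⟩

lemma maxmod {g : ℂ → ℂ} (hg : DifferentiableOn ℂ g D) {r : ℝ} (hr0 : 0 < r) (hr1 : r < 1)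
    {B : ℝ} (hB : ∀ ζ : ℂ, ‖ζ‖ = r → ‖g ζ‖ ≤ B)
    {z : ℂ} (hz : ‖z‖ ≤ r) : ‖g z‖ ≤ B := by
  have hsub : closedBall (0:ℂ) r ⊆ D := closedBall_subset_ball hr1
  have hd : DiffContOnCl ℂ g (ball (0:ℂ) r) := by
    refine ⟨hg.mono (ball_subset_ball hr1.le), (hg.continuousOn).mono ?_⟩
    rw [closure_ball (0:ℂ) hr0.ne']
    exact hsub
  have := Complex.norm_le_of_forall_mem_frontier_norm_le (isBounded_ball) hd
    (C := B) (fun ζ hζ => by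
      rw [frontier_ball (0:ℂ) hr0.ne'] at hζ
      simp only [mem_sphere_iff_norm, sub_zero] at hζ
      exact hB ζ hζ)
    (z := z) (by rw [closure_ball (0:ℂ) hr0.ne']; simpa using hz)
  simpa using this

lemma dslope_mem_Hinf {f : ℂ → ℂ} {a : ℂ} (hf : f ∈ Hinf) (ha : a ∈ D) :
    dslope f a ∈ Hinf := by
  obtain ⟨hfd, C, hC⟩ := hf
  have hC0 : 0 ≤ C := le_trans (norm_nonneg _) (hC a ha)
  have ht : ‖a‖ < 1 := mem_D_iff.1 ha
  have ht0 : (0:ℝ) < 1 - ‖a‖ := by linarith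
  refine ⟨(Complex.differentiableOn_dslope (isOpen_D.mem_nhds ha)).mpr hfd,
    4 * C / (1 - ‖a‖), fun z hz => ?_⟩
  set t := ‖a‖
  set r := (1 + max (‖z‖) t) / 2 with hr
  have hmax1 : max (‖z‖) t < 1 := max_lt (mem_D_iff.1 hz) ht
  have hr1 : r < 1 := by rw [hr]; linarith
  have hr0 : 0 < r := by
    have : (0:ℝ) ≤ max (‖z‖) t := le_trans (norm_nonneg z) (le_max_left _ _)
    rw [hr]; linarith
  have hzr : ‖z‖ ≤ r := by
    have := le_max_left (‖z‖) t; rw [hr]; linarith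
  have htr : t < r := by have := le_max_right (‖z‖) t; rw [hr]; linarith
  refine maxmod ((Complex.differentiableOn_dslope (isOpen_D.mem_nhds ha)).mpr hfd)
    hr0 hr1 (fun ζ hζ => ?_) hzr
  have hζD : ζ ∈ D := mem_D_iff.2 (hζ ▸ hr1)
  have hζa : ζ ≠ a := by
    intro h; rw [h] at hζ; exact absurd hζ (ne_of_lt htr)
  rw [dslope_of_ne f hζa, slope_def_field]
  rw [div_eq_mul_inv, norm_mul, norm_inv]
  have h0 : ‖f ζ - f a‖ ≤ ‖f ζ‖ + ‖f a‖ := by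
    simpa [sub_eq_add_neg] using norm_add_le (f ζ) (-(f a))
  have h1 : ‖f ζ - f a‖ ≤ 2 * C := by
    have := add_le_add (hC ζ hζD) (hC a ha); linarith
  have h2 : r - t ≤ ‖ζ - a‖ := by
    have h5 : ‖ζ‖ - ‖a‖ ≤ ‖ζ - a‖ :=
      norm_sub_norm_le ζ a
    rw [hζ] at h5; linarith
  have h3 : (1 - t)/2 ≤ r - t := by rw [hr]; have := le_max_right (‖z‖) t; linarith
  have hrt0 : 0 < r - t := lt_of_lt_of_le (by linarith) h3
  have h4 : ‖ζ - a‖ ≠ 0 → (‖ζ - a‖)⁻¹ ≤ (r - t)⁻¹ :=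
    fun _ => inv_anti₀ hrt0 h2
  calc ‖f ζ - f a‖ * (‖ζ - a‖)⁻¹
      ≤ (2*C) * (r - t)⁻¹ := by
        refine mul_le_mul h1 (h4 ?_) (inv_nonneg.2 (norm_nonneg _)) (by linarith)
        exact fun h => absurd (norm_eq_zero.1 h) (sub_ne_zero.2 hζa)
    _ ≤ (2*C) * ((1-t)/2)⁻¹ := by
        refine mul_le_mul_of_nonneg_left (inv_anti₀ (by linarith) h3) (by linarith)
    _ = 4 * C / (1 - t) := by field_simp; ring

lemma dslope_zero_bound {f : ℂ → ℂ} {C : ℝ} (hfd : DifferentiableOn ℂ f D)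
    (hC : ∀ z ∈ D, ‖f z‖ ≤ C) (h0 : f 0 = 0) :
    ∀ z ∈ D, ‖dslope f 0 z‖ ≤ C := by
  intro z hz
  have h0D : (0:ℂ) ∈ D := zero_mem_D
  have hC0 : 0 ≤ C := by have := hC 0 h0D; rw [h0] at this; simpa using this
  set g := dslope f 0 with hg
  have hgd : DifferentiableOn ℂ g D :=
    (Complex.differentiableOn_dslope (isOpen_D.mem_nhds h0D)).mpr hfd
  have key : ∀ r : ℝ, 0 < r → ‖z‖ ≤ r → r < 1 → ‖g z‖ ≤ C / r := by
    intro r hr0 hzr hr1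
    refine maxmod hgd hr0 hr1 (fun ζ hζ => ?_) hzr
    have hζ0 : ζ ≠ 0 := by
      intro h; rw [h, norm_zero] at hζ; exact absurd hζ hr0.ne
    have hζD : ζ ∈ D := mem_D_iff.2 (hζ ▸ hr1)
    rw [hg, dslope_of_ne f hζ0, slope_def_field, h0, sub_zero, sub_zero, norm_div, hζ]
    gcongr
    exact hC ζ hζD
  by_contra hcon
  push_neg at hcon
  have hgz : 0 < ‖g z‖ := lt_of_le_of_lt hC0 hcon
  set m := max (max (‖z‖) (1/2)) (C / ‖g z‖) with hm
  have hm1 : m < 1 := by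
    refine max_lt (max_lt (mem_D_iff.1 hz) (by norm_num)) ?_
    exact (div_lt_one hgz).2 hcon
  obtain ⟨r, hmr, hr1⟩ := exists_between hm1
  have hr0 : 0 < r := lt_of_lt_of_le (by norm_num)
    ((le_max_right _ _).trans (le_max_left _ _) |>.trans hmr.le)
  have hzr : ‖z‖ ≤ r := ((le_max_left _ _).trans (le_max_left _ _)).trans hmr.le
  have h1 : ‖g z‖ ≤ C / r := key r hr0 hzr hr1
  have h2 : C / r < ‖g z‖ := by
    have hCr : C / ‖g z‖ < r := lt_of_le_of_lt (le_max_right _ _) hmr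
    rw [div_lt_iff₀ hr0]
    calc C = (C / ‖g z‖) * ‖g z‖ := by field_simp
    _ < r * ‖g z‖ := mul_lt_mul_of_pos_right hCr hgz
    _ = ‖g z‖ * r := mul_comm _ _
  exact absurd h1 (not_le.2 h2)

/-- An abstract character of `H^∞_0`. -/
def CharOn (lam : (ℂ → ℂ) → ℂ) : Prop :=
  (∀ f ∈ Hinf0, ∀ g ∈ Hinf0, Set.EqOn f g D → lam f = lam g) ∧
  (∀ f ∈ Hinf0, ∀ g ∈ Hinf0, lam (f + g) = lam f + lam g) ∧
  (∀ (c : ℂ), ∀ f ∈ Hinf0, lam (c • f) = c * lam f) ∧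
  (∀ f ∈ Hinf0, ∀ g ∈ Hinf0, lam (f * g) = lam f * lam g)

lemma CharOn.bound {lam : (ℂ → ℂ) → ℂ} (h : CharOn lam) {f : ℂ → ℂ} {C : ℝ}
    (hf : f ∈ Hinf0) (hC : ∀ z ∈ D, ‖f z‖ ≤ C) :
    ‖lam f‖ ≤ C := by
  obtain ⟨hcong, hadd, hsmul, hmul⟩ := h
  by_contra hcon; push_neg at hcon
  have hC0 : 0 ≤ C := by have := hC 0 zero_mem_D; rw [hf.2] at this; simpa using this
  have habs : 0 < ‖lam f‖ := lt_of_le_of_lt hC0 hcon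
  have hl0 : lam f ≠ 0 := by
    intro h; rw [h, norm_zero] at habs; exact lt_irrefl _ habs
  set g := (lam f)⁻¹ • f with hgdef
  have hgmem : g ∈ Hinf0 := smul_mem0 _ hf
  have hlg : lam g = 1 := by rw [hgdef, hsmul _ _ hf, inv_mul_cancel₀ hl0]
  set r := C / ‖lam f‖ with hrdef
  have hr1 : r < 1 := (div_lt_one habs).2 hcon
  have hr0 : 0 ≤ r := div_nonneg hC0 (norm_nonneg _)
  have hgb : ∀ z ∈ D, ‖g z‖ ≤ r := by
    intro z hz
    rw [hgdef]
    simp only [Pi.smul_apply, smul_eq_mul, norm_mul, norm_inv]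
    rw [inv_mul_eq_div, hrdef]
    gcongr
    exact hC z hz
  have hden : ∀ z ∈ D, (1:ℂ) - g z ≠ 0 := by
    intro z hz h
    have h1 : g z = 1 := (sub_eq_zero.1 h).symm
    have := hgb z hz
    rw [h1, norm_one] at this
    linarith
  set u : ℂ → ℂ := fun z => g z / (1 - g z) with hu
  have humem : u ∈ Hinf0 := by
    refine ⟨⟨DifferentiableOn.div hgmem.1.1 ((differentiableOn_const 1).sub hgmem.1.1) hden,
      r / (1 - r), fun z hz => ?_⟩, by simp [hu, hgdef, hf.2]⟩
    rw [hu]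
    simp only [norm_div]
    have hlow : 1 - r ≤ ‖1 - g z‖ := by
      have h5 := norm_sub_norm_le (1:ℂ) (g z)
      rw [norm_one] at h5
      linarith [hgb z hz]
    exact div_le_div₀ hr0 (hgb z hz) (by linarith) hlow
  have hgu : g * u ∈ Hinf0 := mul_mem0 hgmem humem.1
  have hsum : g + g * u ∈ Hinf0 := add_mem0 hgmem hgu
  have heq : Set.EqOn (g + g * u) u D := by
    intro z hz
    simp only [Pi.add_apply, Pi.mul_apply, hu]
    field_simp [hden z hz]
    ring
  have h1 : lam (g + g * u) = lam u := hcong _ hsum _ humem heq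
  rw [hadd _ hgmem _ hgu, hmul _ hgmem _ humem, hlg, one_mul] at h1
  have : (1 : ℂ) = 0 := by linear_combination h1
  exact one_ne_zero this

lemma CharOn.eval {lam : (ℂ → ℂ) → ℂ} (h : CharOn lam) {f : ℂ → ℂ}
    (hf : f ∈ Hinf0) (ha : lam (fun z : ℂ => z) ∈ D) :
    lam f = f (lam (fun z : ℂ => z)) := by
  obtain ⟨hcong, hadd, hsmul, hmul⟩ := h
  set idf : ℂ → ℂ := fun z => z with hidf
  set a := lam idf with hadef
  rcases eq_or_ne a 0 with h0 | h0
  · have hds : dslope f 0 ∈ Hinf := dslope_mem_Hinf hf.1 zero_mem_D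
    have hff : f * f ∈ Hinf0 := mul_mem0 hf hf.1
    have hG : f * dslope f 0 ∈ Hinf0 := mul_mem0 hf hds
    have hiG : idf * (f * dslope f 0) ∈ Hinf0 := mul_mem0 idf_mem hG.1
    have heq : Set.EqOn (f * f) (idf * (f * dslope f 0)) D := by
      intro z hz
      simp only [Pi.mul_apply, hidf]
      rcases eq_or_ne z 0 with rfl | hz0
      · simp [hf.2]
      · rw [dslope_of_ne f hz0, slope_def_field, hf.2, sub_zero, sub_zero]
        field_simp
    have hsq : lam f * lam f = 0 := by
      rw [← hmul f hf f hf, hcong _ hff _ hiG heq, hmul idf idf_mem _ hG,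
        ← hadef, h0, zero_mul]
    rw [mul_self_eq_zero.1 hsq, h0, hf.2]
  · have haD : a ∈ D := ha
    have hds : dslope f a ∈ Hinf := dslope_mem_Hinf hf.1 haD
    set g1 := dslope f a with hg1
    have hG : idf * g1 ∈ Hinf0 := mul_mem0 idf_mem hds
    have hif : idf * f ∈ Hinf0 := mul_mem0 idf_mem hf.1
    have hP : idf * f + a • (idf * g1) ∈ Hinf0 := add_mem0 hif (smul_mem0 _ hG)
    have hiiG : idf * (idf * g1) ∈ Hinf0 := mul_mem0 idf_mem hG.1
    have hQ : idf * (idf * g1) + (f a) • idf ∈ Hinf0 := add_mem0 hiiG (smul_mem0 _ idf_mem)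
    have heq : Set.EqOn (idf * f + a • (idf * g1)) (idf * (idf * g1) + (f a) • idf) D := by
      intro z hz
      simp only [Pi.add_apply, Pi.mul_apply, Pi.smul_apply, smul_eq_mul, hidf]
      rcases eq_or_ne z a with rfl | hza
      · ring
      · have hza' : z - a ≠ 0 := sub_ne_zero.2 hza
        rw [hg1, dslope_of_ne f hza, slope_def_field]
        field_simp [hza']
        ring
    have h1 : lam (idf * f + a • (idf * g1)) = lam (idf * (idf * g1) + (f a) • idf) :=
      hcong _ hP _ hQ heq
    rw [hadd _ hif _ (smul_mem0 _ hG), hadd _ hiiG _ (smul_mem0 _ idf_mem),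
      hmul _ idf_mem _ hf, hmul _ idf_mem _ hG, hsmul _ _ hG, hsmul _ _ idf_mem,
      ← hadef] at h1
    have h2 : a * lam f = f a * a := by linear_combination h1
    exact mul_left_cancel₀ h0 (by linear_combination h2)

end Aux

/-- A map `T : H^∞_0(𝔻) → H^∞_0(𝔻)` is an automorphism if and only if it is composition with
a rotation: `(Tf)(z) = f(e^{iθ} z)`. -/
theorem automorphism_of_Hinf0_iff (T : (ℂ → ℂ) → (ℂ → ℂ)) :
    IsAlgAutOn Hinf0 T ↔
      ∃ θ : ℝ, ∀ f ∈ Hinf0, ∀ z ∈ D, T f z = f (Complex.exp ((θ : ℂ) * Complex.I) * z) := by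
  constructor
  · intro hT
    classical
    obtain ⟨hmem, hcong, hadd, hsmul, hmul, hinj, hsurj⟩ := hT
    set idf : ℂ → ℂ := fun z => z with hidf
    have hidm : idf ∈ Hinf0 := idf_mem
    have hchar : ∀ w ∈ D, CharOn (fun f => T f w) := by
      intro w hw
      refine ⟨fun f hf g hg he => hcong f hf g hg he hw,
        fun f hf g hg => by simpa using hadd f hf g hg hw,
        fun c f hf => by simpa using hsmul c f hf hw,
        fun f hf g hg => by simpa using hmul f hf g hg hw⟩
    set φ := T idf with hφdef
    have hφmem : φ ∈ Hinf0 := hmem idf hidm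
    have hφb : ∀ w ∈ D, ‖φ w‖ ≤ 1 := fun w hw =>
      (hchar w hw).bound hidm (fun z hz => (mem_D_iff.1 hz).le)
    have hφD : ∀ w ∈ D, φ w ∈ D := by
      intro w hw
      rw [mem_D_iff]
      rcases lt_or_eq_of_le (hφb w hw) with h | h
      · exact h
      · exfalso
        have hmax : IsMaxOn (norm ∘ φ) D w := by
          rw [isMaxOn_iff]
          intro z hz
          simp only [Function.comp_apply, h]
          exact hφb z hz
        have hpc : IsPreconnected D := (convex_ball (0:ℂ) 1).isPreconnected
        have hconst := Complex.eqOn_of_isPreconnected_of_isMaxOn_norm hpc isOpen_D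
          hφmem.1.1 hw hmax
        have h0 := hconst zero_mem_D
        rw [hφmem.2] at h0
        have : ‖φ w‖ = 0 := by
          rw [show φ w = Function.const ℂ (φ w) (0:ℂ) from rfl, ← h0, norm_zero]
        rw [this] at h
        exact absurd h (by norm_num)
    have heval : ∀ w ∈ D, ∀ f ∈ Hinf0, T f w = f (φ w) := by
      intro w hw f hf
      exact (hchar w hw).eval hf (hφD w hw)
    obtain ⟨ψ, hψmem, hψid⟩ := hsurj idf hidm
    have hψb : ∀ w ∈ D, ‖ψ w‖ ≤ 1 := by
      intro w hw
      set mu : (ℂ → ℂ) → ℂ :=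
        fun g => if hg : g ∈ Hinf0 then (Classical.choose (hsurj g hg)) w else 0 with hmu
      have muspec : ∀ g (hg : g ∈ Hinf0), Classical.choose (hsurj g hg) ∈ Hinf0 ∧
          Set.EqOn (T (Classical.choose (hsurj g hg))) g D :=
        fun g hg => Classical.choose_spec (hsurj g hg)
      have mukey : ∀ g (hg : g ∈ Hinf0) (f' : ℂ → ℂ), f' ∈ Hinf0 →
          Set.EqOn (T f') g D → mu g = f' w := by
        intro g hg f' hf' he
        rw [hmu]
        simp only
        rw [dif_pos hg]
        exact hinj _ (muspec g hg).1 _ hf'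
          (fun z hz => ((muspec g hg).2 hz).trans (he hz).symm) hw
      have hcmu : CharOn mu := by
        refine ⟨?_, ?_, ?_, ?_⟩
        · intro f hf g hg he
          rw [mukey f hf _ (muspec f hf).1 (muspec f hf).2]
          exact (mukey g hg _ (muspec f hf).1 (fun z hz => ((muspec f hf).2 hz).trans (he hz))).symm
        · intro f hf g hg
          obtain ⟨hm1, he1⟩ := muspec f hf
          obtain ⟨hm2, he2⟩ := muspec g hg
          rw [mukey f hf _ hm1 he1, mukey g hg _ hm2 he2]
          refine mukey (f + g) (add_mem0 hf hg) _ (add_mem0 hm1 hm2) (fun z hz => ?_)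
          rw [hadd _ hm1 _ hm2 hz]
          simp only [Pi.add_apply]
          rw [he1 hz, he2 hz]
        · intro c f hf
          obtain ⟨hm1, he1⟩ := muspec f hf
          rw [mukey f hf _ hm1 he1]
          have := mukey (c • f) (smul_mem0 c hf) _ (smul_mem0 c hm1) (fun z hz => ?_)
          · rw [this]; simp
          · rw [hsmul c _ hm1 hz]
            simp only [Pi.smul_apply, smul_eq_mul]
            rw [he1 hz]
        · intro f hf g hg
          obtain ⟨hm1, he1⟩ := muspec f hf
          obtain ⟨hm2, he2⟩ := muspec g hg
          rw [mukey f hf _ hm1 he1, mukey g hg _ hm2 he2]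
          refine mukey (f * g) (mul_mem0 hf hg.1) _ (mul_mem0 hm1 hm2.1) (fun z hz => ?_)
          rw [hmul _ hm1 _ hm2 hz]
          simp only [Pi.mul_apply]
          rw [he1 hz, he2 hz]
      have h1 : mu idf = ψ w := mukey idf hidm ψ hψmem hψid
      have h2 := hcmu.bound hidm (fun z hz => (mem_D_iff.1 hz).le)
      rw [show mu (fun z : ℂ => z) = mu idf from rfl, h1] at h2
      exact h2
    have hψφ : ∀ w ∈ D, ψ (φ w) = w := by
      intro w hw
      have h1 : T ψ w = ψ (φ w) := heval w hw ψ hψmem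
      exact h1.symm.trans (hψid hw)
    have schwarz : ∀ (f : ℂ → ℂ), f ∈ Hinf0 → (∀ z ∈ D, ‖f z‖ ≤ 1) →
        ∀ z ∈ D, ‖f z‖ ≤ ‖z‖ := by
      intro f hf hb z hz
      have hd := dslope_zero_bound hf.1.1 hb hf.2 z hz
      have hfz : f z = z * dslope f 0 z := by
        rcases eq_or_ne z 0 with rfl | h
        · simp [hf.2]
        · rw [dslope_of_ne f h, slope_def_field, hf.2, sub_zero, sub_zero]
          field_simp
      rw [hfz, norm_mul]
      calc ‖z‖ * ‖dslope f 0 z‖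
          ≤ ‖z‖ * 1 := mul_le_mul_of_nonneg_left hd (norm_nonneg z)
        _ = ‖z‖ := mul_one _
    have habs_eq : ∀ w ∈ D, ‖φ w‖ = ‖w‖ := by
      intro w hw
      refine le_antisymm (schwarz φ hφmem hφb w hw) ?_
      have := schwarz ψ hψmem hψb (φ w) (hφD w hw)
      rw [hψφ w hw] at this
      exact this
    set g := dslope φ 0 with hgd
    have hgdiff : DifferentiableOn ℂ g D :=
      (Complex.differentiableOn_dslope (isOpen_D.mem_nhds zero_mem_D)).mpr hφmem.1.1
    have hg1 : ∀ z ∈ D, z ≠ 0 → ‖g z‖ = 1 := by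
      intro z hz h
      have hz0 : ‖z‖ ≠ 0 := by
        intro hc; exact h (norm_eq_zero.1 hc)
      rw [hgd, dslope_of_ne φ h, slope_def_field, hφmem.2, sub_zero, sub_zero, norm_div,
        habs_eq z hz, div_self hz0]
    have hgb : ∀ z ∈ D, ‖g z‖ ≤ 1 :=
      dslope_zero_bound hφmem.1.1 hφb hφmem.2
    have hmax : IsMaxOn (norm ∘ g) D ((1:ℂ)/2) := by
      rw [isMaxOn_iff]
      intro z hz
      simp only [Function.comp_apply]
      rw [hg1 _ half_mem_D (by norm_num)]
      exact hgb z hz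
    have hpc : IsPreconnected D := (convex_ball (0:ℂ) 1).isPreconnected
    have hconst := Complex.eqOn_of_isPreconnected_of_isMaxOn_norm hpc isOpen_D
      hgdiff half_mem_D hmax
    set c := g ((1:ℂ)/2) with hcdef
    have hc1 : ‖c‖ = 1 := hg1 _ half_mem_D (by norm_num)
    have hφeq : ∀ z ∈ D, φ z = c * z := by
      intro z hz
      rcases eq_or_ne z 0 with rfl | h
      · simp [hφmem.2]
      · have hgz : g z = c := hconst hz
        have hfz : φ z = z * g z := by
          rw [hgd, dslope_of_ne φ h, slope_def_field, hφmem.2, sub_zero, sub_zero]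
          field_simp
        rw [hfz, hgz]; ring
    refine ⟨Complex.arg c, fun f hf z hz => ?_⟩
    have hec : Complex.exp ((Complex.arg c : ℂ) * Complex.I) = c := by
      have h5 := Complex.norm_mul_exp_arg_mul_I c
      rw [hc1] at h5
      simpa using h5
    rw [heval z hz f hf, hφeq z hz, hec]
  · rintro ⟨θ, hθ⟩
    set e : ℂ := Complex.exp ((θ:ℂ) * Complex.I) with he
    have habs : ‖e‖ = 1 := by rw [he]; exact Complex.norm_exp_ofReal_mul_I θ
    have he0 : e ≠ 0 := by
      intro h; rw [h, norm_zero] at habs; exact one_ne_zero habs.symm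
    have hmapsmul : ∀ (a : ℂ), ‖a‖ = 1 → ∀ z ∈ D, a * z ∈ D := by
      intro a ha z hz
      rw [mem_D_iff, norm_mul, ha, one_mul]
      exact mem_D_iff.1 hz
    have hcomp : ∀ (a : ℂ), ‖a‖ = 1 → ∀ f ∈ Hinf0, (fun z => f (a * z)) ∈ Hinf0 := by
      intro a ha f hf
      obtain ⟨⟨hfd, C, hC⟩, hf0⟩ := hf
      refine ⟨⟨?_, C, fun z hz => hC _ (hmapsmul a ha z hz)⟩, by simp [hf0]⟩
      exact hfd.comp ((differentiable_const a |>.mul differentiable_id).differentiableOn)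
        (fun z hz => hmapsmul a ha z hz)
    have heinv : ‖e⁻¹‖ = 1 := by rw [norm_inv, habs]; norm_num
    refine ⟨fun f hf => ?_, ?_, ?_, ?_, ?_, ?_, ?_⟩
    · exact mem_of_eqOn (hcomp e habs f hf) (fun z hz => hθ f hf z hz)
    · intro f hf g hg hfg z hz
      rw [hθ f hf z hz, hθ g hg z hz]
      exact hfg (hmapsmul e habs z hz)
    · intro f hf g hg z hz
      rw [hθ (f + g) (add_mem0 hf hg) z hz]
      simp only [Pi.add_apply]
      rw [hθ f hf z hz, hθ g hg z hz]
    · intro c f hf z hz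
      rw [hθ (c • f) (smul_mem0 c hf) z hz]
      simp only [Pi.smul_apply, smul_eq_mul]
      rw [hθ f hf z hz]
    · intro f hf g hg z hz
      rw [hθ (f * g) (mul_mem0 hf hg.1) z hz]
      simp only [Pi.mul_apply]
      rw [hθ f hf z hz, hθ g hg z hz]
    · intro f hf g hg hfg z hz
      have hz' : e⁻¹ * z ∈ D := hmapsmul e⁻¹ heinv z hz
      have h1 := hfg hz'
      rw [hθ f hf _ hz', hθ g hg _ hz'] at h1
      rw [show e * (e⁻¹ * z) = z by field_simp] at h1
      exact h1
    · intro g hg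
      refine ⟨fun z => g (e⁻¹ * z), hcomp e⁻¹ heinv g hg, fun z hz => ?_⟩
      rw [hθ _ (hcomp e⁻¹ heinv g hg) z hz,
        show e⁻¹ * (e * z) = z by field_simp]
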